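/- Let n = 4k ≥ 20 be an integer divisible by four and let G be a complete edge-colored graph with coloring γ in which no n-cycle is rainbow. Suppose G contains a rainbow (3n−10)-cycle v_0 → v_1 → ⋯ → v_{3n−11} → v_0 with (pairwise distinct) edge colors c_i = γ(v_i, v_{i+1}), all indices taken modulo 3n−10, and suppose that γ(v_i, v_{i+n−1}) ∈ {c_i, c_{i+1}, c_{i+2}} and γ(v_i, v_{i+n−7}) ∈ {c_{i+n−7}, c_{i+n−6}, c_{i+n−5}} for every i. Then γ(v_i, v_{i+13}) ∈ {c_i, c_{i+1}, c_{i+2}} for every i modulo 3n−10. -/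

import Mathlib

/-- A rainbow `m`-cycle in the complete graph on `V` edge-colored by `γ`:
pairwise distinct vertices `v i` (`i` mod `m`) with pairwise distinct edge colors
`γ (v i) (v (i+1))`. -/
def RainbowCycle {V C : Type*} (γ : V → V → C) (m : ℕ) (v : ZMod m → V) : Prop :=
  Function.Injective v ∧ Function.Injective (fun i : ZMod m => γ (v i) (v (i + 1)))

/-!
Measure offsets along the rainbow `(3n - 10)`-cycle from `v i`. Through the chord `0 → 13` there
are two `n`-cycles `A` and `B` whose other edges are edges of the long cycle or chords of length
`n - 1` or `n - 7`. By hypothesis each of these edges has colour `c (i + o)` for `o` in a set of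
at most three offsets, and within `A`, as within `B`, these sets are pairwise disjoint. Since
neither cycle is rainbow, the chord repeats the colour of another edge of `A` and of another edge
of `B`; but the offsets occurring along `A` and along `B` have only `0, 1, 2` in common.
-/

open Function

/-- The relative position of the vertices at offsets `p` and `q` of a cycle of length `m`:
adjacent, or joined by a chord of length `n - 1` or `n - 7` (traversed from `p` to `q`). -/
def IsEdgeOrChord (m n p q : ℕ) : Prop :=
  q = p + 1 ∨ p = q + 1 ∨ p = q + (n - 1) ∨ p + (n - 7) = q ∨ p + (n - 7) = q + m

/-- The offsets `o` for which the edge from offset `p` to offset `q` may have colour `c (i + o)`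
under `ChordColorCondition`. -/
def EdgeColorOffset (m n p q o : ℕ) : Prop :=
  q = p + 1 ∧ o = p ∨ p = q + 1 ∧ o = q ∨
    (p = q + (n - 1) ∨ p + (n - 7) = q ∨ p + (n - 7) = q + m) ∧ q ≤ o ∧ o ≤ q + 2

/-- `w 0, …, w (n - 1)` are the offsets, along a cycle of length `m`, of the vertices of an
`n`-cycle whose edges other than `w 0 → w 1` are edges or chords as in `IsEdgeOrChord`, with
pairwise disjoint sets of possible colour offsets. -/
structure IsChordCycle (m n : ℕ) (w : ℕ → ℕ) : Prop where
  closed : w n = w 0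
  lt : ∀ a < n, w a < m
  injOn : Set.InjOn w (Set.Iio n)
  isEdgeOrChord : ∀ a, 1 ≤ a → a < n → IsEdgeOrChord m n (w a) (w (a + 1))
  offset_lt : ∀ a o, 1 ≤ a → a < n → EdgeColorOffset m n (w a) (w (a + 1)) o → o < m
  exists_edge_of_offset : ∃ e : ℕ → ℕ,
    ∀ a o, 1 ≤ a → a < n → EdgeColorOffset m n (w a) (w (a + 1)) o → e o = a

theorem ZMod.natCast_injOn_Iio {m : ℕ} : Set.InjOn (Nat.cast : ℕ → ZMod m) (Set.Iio m) :=
  fun a ha b hb h => by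
    simpa [ZMod.val_natCast_of_lt ha, ZMod.val_natCast_of_lt hb] using congrArg ZMod.val h

section Colouring

variable {V C : Type*} {γ : V → V → C}

theorem exists_color_eq_of_not_rainbowCycle {n : ℕ} {u : ZMod n → V} (hu : Injective u)
    (hno : ¬ RainbowCycle γ n u)
    (hdist : ∀ a b : ZMod n, a ≠ 0 → b ≠ 0 → γ (u a) (u (a + 1)) = γ (u b) (u (b + 1)) → a = b) :
    ∃ a ≠ 0, γ (u 0) (u 1) = γ (u a) (u (a + 1)) := by
  obtain ⟨a, b, hab, hne⟩ := not_injective_iff.mp fun h => hno ⟨hu, h⟩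
  by_cases ha : a = 0
  · subst ha
    exact ⟨b, fun hb => hne hb.symm, by rwa [zero_add] at hab⟩
  by_cases hb : b = 0
  · subst hb
    exact ⟨a, ha, by rw [hab, zero_add]⟩
  exact absurd (hdist a b ha hb hab) hne

variable {m n : ℕ} {v : ZMod m → V} {c : ZMod m → C}

variable (γ n v c) in
def ChordColorCondition : Prop :=
  (∀ i, γ (v i) (v (i + ((n - 1 : ℕ) : ZMod m))) ∈ ({c i, c (i + 1), c (i + 2)} : Set C)) ∧
    ∀ i, γ (v i) (v (i + ((n - 7 : ℕ) : ZMod m))) ∈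
      ({c (i + ((n - 7 : ℕ) : ZMod m)), c (i + ((n - 6 : ℕ) : ZMod m)),
        c (i + ((n - 5 : ℕ) : ZMod m))} : Set C)

theorem RainbowCycle.injective_color (hv : RainbowCycle γ m v)
    (hc : ∀ i, c i = γ (v i) (v (i + 1))) : Injective c := by
  simpa only [← hc] using hv.2

theorem exists_offset_of_mem_triple {x : C} {i : ZMod m} {q : ℕ}
    (h : x ∈ ({c (i + q), c (i + q + 1), c (i + q + 2)} : Set C)) :
    ∃ o, q ≤ o ∧ o ≤ q + 2 ∧ x = c (i + o) := by
  simp only [Set.mem_insert_iff, Set.mem_singleton_iff] at h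
  rcases h with h | h | h
  · exact ⟨q, le_rfl, by omega, h⟩
  · exact ⟨q + 1, by omega, by omega, by rw [h]; push_cast; ring_nf⟩
  · exact ⟨q + 2, by omega, le_rfl, by rw [h]; push_cast; ring_nf⟩

theorem exists_edgeColorOffset (hn : 7 ≤ n) (hsymm : ∀ x y, γ x y = γ y x)
    (hc : ∀ i, c i = γ (v i) (v (i + 1)))
    (hchord : ChordColorCondition γ n v c)
    (i : ZMod m) {p q : ℕ} (hpq : IsEdgeOrChord m n p q) :
    ∃ o, EdgeColorOffset m n p q o ∧ γ (v (i + p)) (v (i + q)) = c (i + o) := by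
  rcases hpq with rfl | rfl | rfl | hq | hq
  · exact ⟨p, Or.inl ⟨rfl, rfl⟩, by rw [hc, Nat.cast_succ, add_assoc]⟩
  · exact ⟨q, Or.inr (Or.inl ⟨rfl, rfl⟩), by rw [hsymm, hc, Nat.cast_succ, add_assoc]⟩
  · obtain ⟨o, hqo, hoq, ho⟩ := exists_offset_of_mem_triple (hchord.1 (i + q))
    refine ⟨o, Or.inr (Or.inr ⟨Or.inl rfl, hqo, hoq⟩), ?_⟩
    rwa [hsymm, Nat.cast_add, ← add_assoc]
  all_goals
    have hq' : i + (p : ZMod m) + ((n - 7 : ℕ) : ZMod m) = i + q := by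
      rw [add_assoc, ← Nat.cast_add, hq]
      try rw [Nat.cast_add, ZMod.natCast_self, add_zero]
    have h6 : ((n - 6 : ℕ) : ZMod m) = ((n - 7 : ℕ) : ZMod m) + 1 := by
      rw [show n - 6 = n - 7 + 1 by omega, Nat.cast_succ]
    have h5 : ((n - 5 : ℕ) : ZMod m) = ((n - 7 : ℕ) : ZMod m) + 2 := by
      rw [show n - 5 = n - 7 + 2 by omega, Nat.cast_add, Nat.cast_ofNat]
    have h := hchord.2 (i + p)
    rw [h6, h5, ← add_assoc, ← add_assoc, hq'] at h
    obtain ⟨o, hqo, hoq, ho⟩ := exists_offset_of_mem_triple h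
    exact ⟨o, Or.inr (Or.inr ⟨by omega, hqo, hoq⟩), ho⟩

theorem IsChordCycle.exists_chord_color {w : ℕ → ℕ} (hw : IsChordCycle m n w) (hn : 7 ≤ n)
    (hsymm : ∀ x y, γ x y = γ y x) (hno : ∀ u : ZMod n → V, ¬ RainbowCycle γ n u)
    (hv : RainbowCycle γ m v) (hc : ∀ i, c i = γ (v i) (v (i + 1)))
    (hchord : ChordColorCondition γ n v c)
    (i : ZMod m) :
    ∃ a, 1 ≤ a ∧ a < n ∧ ∃ o < m, EdgeColorOffset m n (w a) (w (a + 1)) o ∧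
      γ (v (i + w 0)) (v (i + w 1)) = c (i + o) := by
  have : NeZero n := ⟨by omega⟩
  have : Fact (1 < n) := ⟨by omega⟩
  set u : ZMod n → V := fun j => v (i + w j.val) with hu
  have hu_succ (j : ZMod n) : u (j + 1) = v (i + w (j.val + 1)) := by
    simp only [hu, ZMod.val_add, ZMod.val_one]
    obtain h | h : j.val + 1 < n ∨ j.val + 1 = n := by have := j.val_lt; omega
    · rw [Nat.mod_eq_of_lt h]
    · rw [h, Nat.mod_self, hw.closed]
  have hu_inj : Injective u := fun a b hab =>
    ZMod.val_injective n <| hw.injOn a.val_lt b.val_lt <|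
      ZMod.natCast_injOn_Iio (hw.lt _ a.val_lt) (hw.lt _ b.val_lt) (add_left_cancel (hv.1 hab))
  have hedge (j : ZMod n) (hj : j ≠ 0) : ∃ o < m,
      EdgeColorOffset m n (w j.val) (w (j.val + 1)) o ∧ γ (u j) (u (j + 1)) = c (i + o) := by
    have hj1 : 1 ≤ j.val := ZMod.val_pos.mpr hj
    obtain ⟨o, ho, hcol⟩ := exists_edgeColorOffset hn hsymm hc hchord i
      (hw.isEdgeOrChord _ hj1 j.val_lt)
    exact ⟨o, hw.offset_lt _ _ hj1 j.val_lt ho, ho, by rw [hu_succ]; exact hcol⟩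
  obtain ⟨j, hj, hcol⟩ := exists_color_eq_of_not_rainbowCycle hu_inj (hno u) <| by
    intro a b ha hb hab
    obtain ⟨o, hom, hoa, hca⟩ := hedge a ha
    obtain ⟨o', hom', hob, hcb⟩ := hedge b hb
    have hoo : o = o' := ZMod.natCast_injOn_Iio hom hom' <|
      add_left_cancel (hv.injective_color hc (hca.symm.trans (hab.trans hcb)))
    subst hoo
    obtain ⟨e, he⟩ := hw.exists_edge_of_offset
    exact ZMod.val_injective n <| (he _ _ (ZMod.val_pos.mpr ha) a.val_lt hoa).symm.trans
      (he _ _ (ZMod.val_pos.mpr hb) b.val_lt hob)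
  obtain ⟨o, hom, ho, hjcol⟩ := hedge j hj
  refine ⟨j.val, ZMod.val_pos.mpr hj, j.val_lt, o, hom, ho, ?_⟩
  rw [← hjcol, ← hcol, ← zero_add (1 : ZMod n), hu_succ]
  simp [hu]

end Colouring

/-- The cycle `0, 13, 14, …, 2k+8, 6k+1, 6k, …, 4k+4, 5, 4, …, 1`. -/
def cycleA (k a : ℕ) : ℕ :=
  if a = 0 then 0
  else if a ≤ 2 * k - 4 then a + 12
  else if a ≤ 4 * k - 6 then 8 * k - 2 - a
  else 4 * k - a

/-- The cycle `0, 13, 12, …, 8, 4k+1, 8k-6, 12k-13, 12k-14, …, 8k-3`. -/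
def cycleB (k a : ℕ) : ℕ :=
  if a = 0 then 0
  else if a ≤ 6 then 14 - a
  else if a = 7 then 4 * k + 1
  else if a = 8 then 8 * k - 6
  else if a < 4 * k then 12 * k - 4 - a
  else 0

theorem edgeColorOffset_cycleA {k a o : ℕ} (hk : 5 ≤ k) (ha1 : 1 ≤ a) (ha2 : a < 4 * k)
    (ho : EdgeColorOffset (3 * (4 * k) - 10) (4 * k) (cycleA k a) (cycleA k (a + 1)) o) :
    o ≤ 7 ∨ 13 ≤ o ∧ o ≤ 2 * k + 7 ∨ 4 * k + 4 ≤ o ∧ o ≤ 6 * k + 3 := by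
  simp only [EdgeColorOffset, cycleA, Nat.add_one_ne_zero, ↓reduceIte] at ho
  -- `split_ifs` may leave `False ∧ _` disjuncts, which `omega` cannot read.
  split_ifs at ho <;> (try simp only [false_and, false_or] at ho) <;> omega

theorem edgeColorOffset_cycleB {k a o : ℕ} (hk : 5 ≤ k) (ha1 : 1 ≤ a) (ha2 : a < 4 * k)
    (ho : EdgeColorOffset (3 * (4 * k) - 10) (4 * k) (cycleB k a) (cycleB k (a + 1)) o) :
    o ≤ 2 ∨ 8 ≤ o ∧ o ≤ 12 ∨ 4 * k + 1 ≤ o ∧ o ≤ 4 * k + 3 ∨ 8 * k - 6 ≤ o ∧ o ≤ 12 * k - 11 := by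
  simp only [EdgeColorOffset, cycleB, Nat.add_one_ne_zero, ↓reduceIte] at ho
  split_ifs at ho <;> (try simp only [false_and, false_or] at ho) <;> omega

theorem isChordCycle_cycleA {k : ℕ} (hk : 5 ≤ k) :
    IsChordCycle (3 * (4 * k) - 10) (4 * k) (cycleA k) where
  closed := by simp only [cycleA]; split_ifs <;> omega
  lt a ha := by simp only [cycleA]; split_ifs <;> omega
  injOn a ha b hb h := by
    simp only [Set.mem_Iio] at ha hb
    simp only [cycleA] at h
    split_ifs at h <;> omega
  isEdgeOrChord a ha1 ha2 := by
    simp only [IsEdgeOrChord, cycleA, Nat.add_one_ne_zero, ↓reduceIte]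
    split_ifs <;> omega
  offset_lt a o ha1 ha2 ho := by have := edgeColorOffset_cycleA hk ha1 ha2 ho; omega
  exists_edge_of_offset := by
    refine ⟨fun o => if o ≤ 4 then 4 * k - 1 - o else if o ≤ 7 then 4 * k - 6
      else if o ≤ 2 * k + 7 then o - 12 else if o ≤ 6 * k then 8 * k - 3 - o else 2 * k - 4,
      fun a o ha1 ha2 ho => ?_⟩
    beta_reduce
    simp only [EdgeColorOffset, cycleA, Nat.add_one_ne_zero, ↓reduceIte] at ho
    split_ifs at ho <;> (try simp only [false_and, false_or] at ho) <;> split_ifs <;> omega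

theorem isChordCycle_cycleB {k : ℕ} (hk : 5 ≤ k) :
    IsChordCycle (3 * (4 * k) - 10) (4 * k) (cycleB k) where
  closed := by simp only [cycleB]; split_ifs <;> omega
  lt a ha := by simp only [cycleB]; split_ifs <;> omega
  injOn a ha b hb h := by
    simp only [Set.mem_Iio] at ha hb
    simp only [cycleB] at h
    split_ifs at h <;> omega
  isEdgeOrChord a ha1 ha2 := by
    simp only [IsEdgeOrChord, cycleB, Nat.add_one_ne_zero, ↓reduceIte]
    split_ifs <;> omega
  offset_lt a o ha1 ha2 ho := by have := edgeColorOffset_cycleB hk ha1 ha2 ho; omega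
  exists_edge_of_offset := by
    refine ⟨fun o => if o ≤ 2 then 4 * k - 1 else if o ≤ 12 then 13 - o
      else if o ≤ 4 * k + 3 then 6 else if o ≤ 8 * k - 4 then 7
      else if 12 * k - 13 ≤ o then 8 else 12 * k - 5 - o, fun a o ha1 ha2 ho => ?_⟩
    beta_reduce
    simp only [EdgeColorOffset, cycleB, Nat.add_one_ne_zero, ↓reduceIte] at ho
    split_ifs at ho <;> (try simp only [false_and, false_or] at ho) <;> split_ifs <;> omega

/-- If `n = 4k ≥ 20`, no `n`-cycle is rainbow, `v` is a rainbow `(3n-10)`-cycle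
with colors `c i = γ (v i) (v (i+1))`, `γ (v i) (v (i+n-1)) ∈ {c i, c (i+1), c (i+2)}` and
`γ (v i) (v (i+n-7)) ∈ {c (i+n-7), c (i+n-6), c (i+n-5)}` for every `i`, then
`γ (v i) (v (i+13)) ∈ {c i, c (i+1), c (i+2)}` for every `i`. -/
theorem stmt9 {V C : Type*} (γ : V → V → C) (hsymm : ∀ x y, γ x y = γ y x)
    (n k : ℕ) (hk : n = 4 * k) (hn : 20 ≤ n)
    (hno : ∀ u : ZMod n → V, ¬ RainbowCycle γ n u)
    (v : ZMod (3 * n - 10) → V) (hv : RainbowCycle γ (3 * n - 10) v)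
    (c : ZMod (3 * n - 10) → C) (hc : ∀ i, c i = γ (v i) (v (i + 1)))
    (h1 : ∀ i, γ (v i) (v (i + ((n - 1 : ℕ) : ZMod (3 * n - 10)))) ∈
      ({c i, c (i + 1), c (i + 2)} : Set C))
    (h2 : ∀ i, γ (v i) (v (i + ((n - 7 : ℕ) : ZMod (3 * n - 10)))) ∈
      ({c (i + ((n - 7 : ℕ) : ZMod (3 * n - 10))),
        c (i + ((n - 6 : ℕ) : ZMod (3 * n - 10))),
        c (i + ((n - 5 : ℕ) : ZMod (3 * n - 10)))} : Set C)) :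
    ∀ i, γ (v i) (v (i + 13)) ∈ ({c i, c (i + 1), c (i + 2)} : Set C) := by
  intro i
  subst hk
  have hk5 : 5 ≤ k := by omega
  obtain ⟨a, ha1, ha2, o, ho, hoa, hA⟩ :=
    (isChordCycle_cycleA hk5).exists_chord_color (by omega) hsymm hno hv hc ⟨h1, h2⟩ i
  obtain ⟨b, hb1, hb2, o', ho', hob, hB⟩ :=
    (isChordCycle_cycleB hk5).exists_chord_color (by omega) hsymm hno hv hc ⟨h1, h2⟩ i
  have hstart : cycleA k 0 = 0 ∧ cycleA k 1 = 13 ∧ cycleB k 0 = 0 ∧ cycleB k 1 = 13 :=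
    ⟨rfl, by simp only [cycleA]; split_ifs <;> omega, rfl, rfl⟩
  simp only [hstart, Nat.cast_zero, add_zero, Nat.cast_ofNat] at hA hB
  obtain rfl : o = o' := ZMod.natCast_injOn_Iio ho ho' <|
    add_left_cancel (hv.injective_color hc (hA.symm.trans hB))
  have : o ≤ 2 := by
    have := edgeColorOffset_cycleA hk5 ha1 ha2 hoa
    have := edgeColorOffset_cycleB hk5 hb1 hb2 hob
    omega
  rw [hA]
  interval_cases o <;> simp
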